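/- arXiv:2306.15523 — 4 statements merged into one kernel-verified Lean document; each statement's English description precedes it below -/
import Mathlib

section
/- Let A be a connected open subset of ℝ^d and B ⊆ ℝ^d a bounded open set such that ∂B ⊆ A, B is C¹ regular, and the boundary of each connected component of B is connected. Then A \ closure(B) is connected. -/
open Set

noncomputable section S3Aux
variable {d : ℕ}
local notation "E" => EuclideanSpace ℝ (Fin d)

/-- auxiliary "height" coordinate along `v` based at `a`. -/
def s3gg (a v z : EuclideanSpace ℝ (Fin d)) : ℝ := inner ℝ (z - a) v / ‖v‖^2

/-- auxiliary "horizontal" part. -/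
def s3uu (a v z : EuclideanSpace ℝ (Fin d)) : EuclideanSpace ℝ (Fin d) :=
  z - a - s3gg a v z • v

lemma s3gg_add (a v z : E) (hv : v ≠ 0) (s : ℝ) :
    s3gg a v (z + s • v) = s3gg a v z + s := by
  have hM : ‖v‖ ≠ 0 := norm_ne_zero_iff.mpr hv
  simp only [s3gg]
  have : z + s • v - a = (z - a) + s • v := by abel
  rw [this, inner_add_left, real_inner_smul_left, real_inner_self_eq_norm_sq]
  field_simp
 

lemma s3uu_add (a v z : E) (hv : v ≠ 0) (s : ℝ) :
    s3uu a v (z + s • v) = s3uu a v z := by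
  simp only [s3uu, s3gg_add a v z hv s, add_smul]
  abel

lemma s3_decomp (a v z : E) : z - a = s3uu a v z + s3gg a v z • v := by
  simp only [s3uu]; abel

lemma s3gg_self (a v : E) : s3gg a v a = 0 := by simp [s3gg]

lemma s3uu_self (a v : E) : s3uu a v a = 0 := by simp [s3uu, s3gg_self]

lemma s3gg_neg (a v z : E) : s3gg a (-v) z = -(s3gg a v z) := by
  simp [s3gg, inner_neg_right, neg_div]

lemma s3uu_neg (a v z : E) : s3uu a (-v) z = s3uu a v z := by
  simp [s3uu, s3gg_neg]

lemma s3gg_combo (a v z₁ z₂ : E) (p q : ℝ) (hpq : p + q = 1) :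
    s3gg a v (p • z₁ + q • z₂) = p * s3gg a v z₁ + q * s3gg a v z₂ := by
  have h1 : p • z₁ + q • z₂ - a = p • (z₁ - a) + q • (z₂ - a) := by
    calc p • z₁ + q • z₂ - a = p • z₁ + q • z₂ - (p + q) • a := by rw [hpq, one_smul]
      _ = p • (z₁ - a) + q • (z₂ - a) := by module
  simp only [s3gg, h1, inner_add_left, real_inner_smul_left]
  ring

lemma s3uu_combo (a v z₁ z₂ : E) (p q : ℝ) (hpq : p + q = 1) :
    s3uu a v (p • z₁ + q • z₂) = p • s3uu a v z₁ + q • s3uu a v z₂ := by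
  simp only [s3uu, s3gg_combo a v z₁ z₂ p q hpq]
  calc p • z₁ + q • z₂ - a - (p * s3gg a v z₁ + q * s3gg a v z₂) • v
      = p • z₁ + q • z₂ - (p + q) • a - (p * s3gg a v z₁ + q * s3gg a v z₂) • v := by
        rw [hpq, one_smul]
    _ = p • (z₁ - a - s3gg a v z₁ • v) + q • (z₂ - a - s3gg a v z₂ • v) := by module

lemma s3gg_continuous (a v : E) : Continuous (s3gg a v) := by
  exact ((continuous_id.sub continuous_const).inner continuous_const).div_const _

lemma s3uu_continuous (a v : E) : Continuous (s3uu a v) := by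
  exact (continuous_id.sub continuous_const).sub ((s3gg_continuous a v).smul continuous_const)

def s3S (a v : EuclideanSpace ℝ (Fin d)) (f : EuclideanSpace ℝ (Fin d) → ℝ) (δ η : ℝ) :
    Set (EuclideanSpace ℝ (Fin d)) :=
  {z | (‖s3uu a v z‖ < δ ∧ |s3gg a v z| < η) ∧ 0 < f z}

theorem s3slab (a v : E) (f : EuclideanSpace ℝ (Fin d) → ℝ) (δ η : ℝ)
    (hv : v ≠ 0) (hδ : 0 < δ) (hη : 0 < η) (hfa : f a = 0)
    (hmono : ∀ z s, 0 ≤ s → ‖s3uu a v z‖ ≤ δ → |s3gg a v z| ≤ η →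
      |s3gg a v z + s| ≤ η → f z + s / 2 ≤ f (z + s • v))
    (hbase : ∀ z, ‖s3uu a v z‖ ≤ δ → s3gg a v z = 0 → |f z| ≤ η / 8) :
    IsPreconnected (s3S a v f δ η) ∧ a ∈ closure (s3S a v f δ η) := by
  have hM : 0 < ‖v‖ := norm_pos_iff.mpr hv
  set t₀ : ℝ := η / 2 with ht₀def
  have ht₀ : 0 < t₀ := by positivity
  -- points at level ≥ t₀ (and ≤ η) with small horizontal part have f ≥ η/8
  have hlow : ∀ z, ‖s3uu a v z‖ ≤ δ → t₀ ≤ s3gg a v z → s3gg a v z ≤ η → η / 8 ≤ f z := by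
    intro z huz hgz1 hgz2
    set b := z + (-(s3gg a v z)) • v with hbdef
    have hgb : s3gg a v b = 0 := by rw [hbdef, s3gg_add a v z hv]; ring
    have hub : ‖s3uu a v b‖ ≤ δ := by rw [hbdef, s3uu_add a v z hv]; exact huz
    have hzb : b + (s3gg a v z) • v = z := by rw [hbdef]; module
    have h1 := hmono b (s3gg a v z) (le_trans ht₀.le hgz1) hub
      (by rw [hgb]; simpa using hη.le)
      (by rw [hgb, zero_add, abs_le]; constructor <;> linarith)
    rw [hzb] at h1
    have h2 := hbase b hub hgb
    have h3 : -(η/8) ≤ f b := by cases' abs_le.mp h2 with h _; linarith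
    linarith
  -- the top slab T
  set T : Set (EuclideanSpace ℝ (Fin d)) :=
    {z | ‖s3uu a v z‖ < δ ∧ s3gg a v z = t₀} with hTdef
  have hTS : T ⊆ s3S a v f δ η := by
    rintro z ⟨h1, h2⟩
    refine ⟨⟨h1, by rw [h2, abs_of_pos ht₀]; linarith⟩, ?_⟩
    have := hlow z h1.le (le_of_eq h2.symm) (by rw [h2]; linarith)
    linarith
  have hTconv : Convex ℝ T := by
    intro x hx y hy p q hp hq hpq
    obtain ⟨hx1, hx2⟩ := hx
    obtain ⟨hy1, hy2⟩ := hy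
    constructor
    · show ‖s3uu a v _‖ < δ
      rw [s3uu_combo a v x y p q hpq]
      rcases eq_or_lt_of_le hp with h0 | hp'
      · simp only [← h0, zero_smul, zero_add]
        have hq1 : q = 1 := by linarith
        rw [hq1, one_smul]; exact hy1
      · calc ‖p • s3uu a v x + q • s3uu a v y‖ ≤ p * ‖s3uu a v x‖ + q * ‖s3uu a v y‖ := by
              refine le_trans (norm_add_le _ _) (le_of_eq ?_)
              rw [norm_smul, norm_smul, Real.norm_eq_abs, Real.norm_eq_abs,
                abs_of_nonneg hp, abs_of_nonneg hq]
          _ < δ := by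
              have h1 : p * ‖s3uu a v x‖ < p * δ := by
                exact mul_lt_mul_of_pos_left hx1 hp'
              have h2 : q * ‖s3uu a v y‖ ≤ q * δ := mul_le_mul_of_nonneg_left hy1.le hq
              have h3 : p * δ + q * δ = δ := by rw [← add_mul, hpq, one_mul]
              linarith
    · show s3gg a v _ = t₀
      rw [s3gg_combo a v x y p q hpq, hx2, hy2, ← add_mul, hpq, one_mul]
  -- the common point p₀
  set p₀ : E := a + t₀ • v with hp₀def
  have hup₀ : s3uu a v p₀ = 0 := by rw [hp₀def, s3uu_add a v a hv, s3uu_self]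
  have hgp₀ : s3gg a v p₀ = t₀ := by rw [hp₀def, s3gg_add a v a hv, s3gg_self]; ring
  have hp₀T : p₀ ∈ T := ⟨by rw [hup₀]; simpa using hδ, hgp₀⟩
  -- the segments
  have hseg : ∀ z ∈ s3S a v f δ η,
      segment ℝ z (z + (t₀ - s3gg a v z) • v) ⊆ s3S a v f δ η := by
    rintro z ⟨⟨hz1, hz2⟩, hz3⟩ q hq
    rw [segment_eq_image'] at hq
    obtain ⟨θ, hθ, rfl⟩ := hq
    obtain ⟨hθ0, hθ1⟩ := hθ
    simp only [add_sub_cancel_left, smul_smul]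
    set s : ℝ := θ * (t₀ - s3gg a v z) with hsdef
    have hgq : s3gg a v (z + s • v) = s3gg a v z + s := s3gg_add a v z hv s
    have huq : ‖s3uu a v (z + s • v)‖ < δ := by rw [s3uu_add a v z hv]; exact hz1
    have habs : |s3gg a v z| < η := hz2
    have hgzlt : -η < s3gg a v z ∧ s3gg a v z < η := abs_lt.mp habs
    rcases le_or_gt (s3gg a v z) t₀ with hcase | hcase
    · -- going up: 0 ≤ s ≤ t₀ - g z
      have hs0 : 0 ≤ s := mul_nonneg hθ0 (by linarith)
      have hsle : s ≤ t₀ - s3gg a v z := by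
        have := mul_le_mul_of_nonneg_right hθ1 (show (0:ℝ) ≤ t₀ - s3gg a v z by linarith)
        rw [one_mul] at this
        exact this
      have hgbound : |s3gg a v z + s| ≤ η := by
        rw [abs_le]; constructor
        · linarith [hgzlt.1]
        · linarith
      have := hmono z s hs0 hz1.le habs.le hgbound
      refine ⟨⟨huq, ?_⟩, by linarith⟩
      rw [hgq, abs_lt]; constructor
      · linarith [hgzlt.1]
      · linarith
    · -- z is above the level t₀ : s ≤ 0 and level of q stays in [t₀, g z]
      have hs0 : s ≤ 0 := mul_nonpos_of_nonneg_of_nonpos hθ0 (by linarith)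
      have hsge : t₀ - s3gg a v z ≤ s := by
        have := mul_le_mul_of_nonpos_right hθ1 (show t₀ - s3gg a v z ≤ 0 by linarith)
        rw [one_mul] at this
        exact this
      have hq1 : t₀ ≤ s3gg a v (z + s • v) := by rw [hgq]; linarith
      have hq2 : s3gg a v (z + s • v) ≤ η := by rw [hgq]; linarith [hgzlt.2]
      have := hlow (z + s • v) huq.le hq1 hq2
      refine ⟨⟨huq, ?_⟩, by linarith⟩
      rw [hgq, abs_lt]; constructor
      · linarith [hgzlt.1]
      · linarith [hgzlt.2]
  -- J z is preconnected and contains both z and p₀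
  have hJ : ∀ z ∈ s3S a v f δ η,
      IsPreconnected (segment ℝ z (z + (t₀ - s3gg a v z) • v) ∪ T) := by
    intro z hz
    apply IsPreconnected.union (z + (t₀ - s3gg a v z) • v)
    · exact right_mem_segment ℝ _ _
    · constructor
      · rw [s3uu_add a v z hv]; exact hz.1.1
      · rw [s3gg_add a v z hv]; ring
    · exact (convex_segment _ _).isPreconnected
    · exact hTconv.isPreconnected
  constructor
  · -- preconnectedness via iUnion
    have hrw : s3S a v f δ η =
        ⋃ z : s3S a v f δ η, (segment ℝ z.1 (z.1 + (t₀ - s3gg a v z.1) • v) ∪ T) := by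
      apply Subset.antisymm
      · intro z hz
        exact mem_iUnion.mpr ⟨⟨z, hz⟩, Or.inl (left_mem_segment ℝ _ _)⟩
      · intro z hz
        obtain ⟨⟨w, hw⟩, hzw⟩ := mem_iUnion.mp hz
        rcases hzw with h | h
        · exact hseg w hw h
        · exact hTS h
    rw [hrw]
    apply isPreconnected_iUnion
    · exact ⟨p₀, mem_iInter.mpr fun z => Or.inr hp₀T⟩
    · exact fun z => hJ z.1 z.2
  · -- a is in the closure
    rw [Metric.mem_closure_iff]
    intro ρ hρ
    set s : ℝ := min (t₀ / 2) (ρ / (2 * ‖v‖)) with hsdef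
    have hs0 : 0 < s := by
      apply lt_min (by positivity) (by positivity)
    refine ⟨a + s • v, ⟨⟨?_, ?_⟩, ?_⟩, ?_⟩
    · rw [s3uu_add a v a hv, s3uu_self]; simpa using hδ
    · rw [s3gg_add a v a hv, s3gg_self, zero_add, abs_of_pos hs0]
      calc s ≤ t₀ / 2 := min_le_left _ _
        _ < η := by rw [ht₀def]; linarith
    · have := hmono a s hs0.le (by rw [s3uu_self]; simpa using hδ.le)
        (by rw [s3gg_self]; simpa using hη.le)
        (by rw [s3gg_self, zero_add, abs_of_pos hs0]
            calc s ≤ t₀/2 := min_le_left _ _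
              _ ≤ η := by rw [ht₀def]; linarith)
      rw [hfa] at this
      linarith
    · rw [dist_comm, dist_eq_norm, add_sub_cancel_left, norm_smul, Real.norm_eq_abs,
        abs_of_pos hs0]
      calc s * ‖v‖ ≤ (ρ / (2 * ‖v‖)) * ‖v‖ := by
            apply mul_le_mul_of_nonneg_right (min_le_right _ _) hM.le
        _ < ρ := by
            rw [div_mul_eq_mul_div, div_lt_iff₀ (by positivity)]
            nlinarith

set_option maxHeartbeats 1000000 in
/-- The key local structure lemma: near a regular boundary point `a`,
there are arbitrarily small open neighborhoods `W ⊆ A` such that both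
`W \ closure B` and `W ∩ B` are preconnected with `a` in their closures. -/
theorem s3local {A B : Set (EuclideanSpace ℝ (Fin d))}
    (hAo : IsOpen A) (hBA : frontier B ⊆ A) (hBo : IsOpen B)
    (hreg : ∀ x ∈ frontier B, ∃ f : EuclideanSpace ℝ (Fin d) → ℝ,
      ContDiffAt ℝ 1 f x ∧ fderiv ℝ f x ≠ 0 ∧
      ∀ᶠ y in nhds x, (y ∈ B ↔ f y < 0)) :
    ∀ a ∈ frontier B, ∀ ε > 0, ∃ W : Set (EuclideanSpace ℝ (Fin d)),
      IsOpen W ∧ a ∈ W ∧ W ⊆ A ∧ W ⊆ Metric.ball a ε ∧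
      IsPreconnected (W \ closure B) ∧ a ∈ closure (W \ closure B) ∧
      IsPreconnected (W ∩ B) ∧ a ∈ closure (W ∩ B) := by
  intro a ha ε hε
  obtain ⟨f, hf, hd, hBf⟩ := hreg a ha
  have haA : a ∈ A := hBA ha
  have hanB : a ∉ B := fun h => (hBo.frontier_eq ▸ ha).2 h
  have haclB : a ∈ closure B := frontier_subset_closure ha
  -- the direction v with (fderiv f a) v = 1
  set L' := fderiv ℝ f a with hL'def
  obtain ⟨w, hw⟩ : ∃ w, L' w ≠ 0 := by
    by_contra h
    push_neg at h
    exact hd (ContinuousLinearMap.ext fun w => by rw [h w]; rfl)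
  set v : EuclideanSpace ℝ (Fin d) := (L' w)⁻¹ • w with hvdef
  have hLv : L' v = 1 := by
    rw [hvdef, map_smul]
    simp [inv_mul_cancel₀ hw]
  have hv : v ≠ 0 := by
    intro h
    rw [h, map_zero] at hLv
    exact one_ne_zero hLv.symm
  have hM : 0 < ‖v‖ := norm_pos_iff.mpr hv
  set M := ‖v‖ with hMdef
  set L : ℝ := ‖L'‖ + (2 * M)⁻¹ with hLdef
  have hL : 0 < L := by positivity
  -- a good neighborhood
  obtain ⟨u₀, hu₀, hCD⟩ := hf.contDiffOn le_rfl (by simp)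
  set V := interior u₀ with hVdef
  have hVo : IsOpen V := isOpen_interior
  have haV : a ∈ V := mem_interior_iff_mem_nhds.mpr hu₀
  have hCDV : ContDiffOn ℝ 1 f V := hCD.mono interior_subset
  have hdiffV : ∀ y ∈ V, DifferentiableAt ℝ f y := fun y hy =>
    ((hCDV.differentiableOn one_ne_zero).differentiableAt (hVo.mem_nhds hy))
  have hcontAt : ContinuousAt (fderiv ℝ f) a :=
    (hCDV.continuousOn_fderiv_of_isOpen hVo le_rfl).continuousAt (hVo.mem_nhds haV)
  have hclose : ∀ᶠ y in nhds a, ‖fderiv ℝ f y - L'‖ < (2 * M)⁻¹ := by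
    have := Metric.tendsto_nhds.mp hcontAt ((2 * M)⁻¹) (by positivity)
    simpa [dist_eq_norm] using this
  have hall : ∀ᶠ y in nhds a, y ∈ V ∧ ‖fderiv ℝ f y - L'‖ < (2 * M)⁻¹ ∧ y ∈ A ∧
      (y ∈ B ↔ f y < 0) := by
    filter_upwards [hVo.mem_nhds haV, hclose, hAo.mem_nhds haA, hBf] with y h1 h2 h3 h4
    exact ⟨h1, h2, h3, h4⟩
  obtain ⟨r₁, hr₁, hball₁⟩ := Metric.mem_nhds_iff.mp hall
  set r := min r₁ ε with hrdef
  have hr : 0 < r := lt_min hr₁ hε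
  have hballsub : Metric.ball a r ⊆ Metric.ball a ε := Metric.ball_subset_ball (min_le_right _ _)
  have hΩ : ∀ y ∈ Metric.ball a r, y ∈ V ∧ ‖fderiv ℝ f y - L'‖ < (2 * M)⁻¹ ∧ y ∈ A ∧
      (y ∈ B ↔ f y < 0) := fun y hy => hball₁ (Metric.ball_subset_ball (min_le_left _ _) hy)
  have haΩ : a ∈ Metric.ball a r := Metric.mem_ball_self hr
  -- f a = 0
  have hfa : f a = 0 := by
    have h1 : ¬ f a < 0 := fun h => hanB ((hΩ a haΩ).2.2.2.mpr h)
    rcases lt_trichotomy (f a) 0 with h | h | h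
    · exact absurd h h1
    · exact h
    · exfalso
      have hcont : ContinuousAt f a := (hdiffV a haV).continuousAt
      have h2 : ∀ᶠ y in nhds a, 0 < f y := by
        have := hcont.preimage_mem_nhds (isOpen_Ioi.mem_nhds (by simpa using h))
        filter_upwards [this] with y hy using hy
      have h3 : ∀ᶠ y in nhds a, y ∉ B := by
        filter_upwards [h2, hBf] with y hy1 hy2
        intro hyB
        exact absurd ((hy2).mp hyB) (by linarith)
      obtain ⟨y, hy1, hy2⟩ := (mem_closure_iff_nhds.mp haclB _ h3)
      exact hy1 hy2
  -- the parameters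
  obtain ⟨η, hη, δ, hδ, hsum, hLδ0⟩ :
      ∃ η, 0 < η ∧ ∃ δ, 0 < δ ∧ δ + η * M < r ∧ L * δ ≤ η / 8 := by
    have hparam : ∀ R MM LL : ℝ, 0 < R → 0 < MM → 0 < LL →
        ∃ η, 0 < η ∧ ∃ δ, 0 < δ ∧ δ + η * MM < R ∧ LL * δ ≤ η / 8 := by
      intro R MM LL hR hMM hLL
      refine ⟨R / (4 * (MM + 1)), by positivity,
        R / (4 * (MM + 1)) / (8 * (LL + 1)), by positivity, ?_, ?_⟩
      · have h1 : R / (4 * (MM + 1)) * (MM + 1) = R / 4 := by field_simp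
        have h2 : R / (4 * (MM + 1)) / (8 * (LL + 1)) ≤ R / (4 * (MM + 1)) :=
          div_le_self (by positivity) (by linarith)
        nlinarith [h1, h2, hR]
      · have h3 : R / (4 * (MM + 1)) / (8 * (LL + 1)) * (8 * (LL + 1)) =
            R / (4 * (MM + 1)) := by field_simp
        have h4 : 0 ≤ R / (4 * (MM + 1)) / (8 * (LL + 1)) := by positivity
        nlinarith [h3, h4, hLL]
    exact hparam r M L hr hM hL
  -- membership of slab points in the ball
  have hWball : ∀ z : EuclideanSpace ℝ (Fin d), ‖s3uu a v z‖ ≤ δ → |s3gg a v z| ≤ η →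
      z ∈ Metric.ball a r := by
    intro z h1 h2
    rw [Metric.mem_ball, dist_eq_norm]
    calc ‖z - a‖ = ‖s3uu a v z + s3gg a v z • v‖ := by rw [← s3_decomp a v z]
      _ ≤ ‖s3uu a v z‖ + ‖s3gg a v z • v‖ := norm_add_le _ _
      _ = ‖s3uu a v z‖ + |s3gg a v z| * M := by rw [norm_smul, Real.norm_eq_abs]
      _ ≤ δ + η * M := by
          have := mul_le_mul_of_nonneg_right h2 hM.le
          linarith
      _ < r := hsum
  -- the monotonicity estimate along v
  have hmono : ∀ z s, 0 ≤ s → ‖s3uu a v z‖ ≤ δ → |s3gg a v z| ≤ η →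
      |s3gg a v z + s| ≤ η → f z + s / 2 ≤ f (z + s • v) := by
    intro z s hs hu hg hgs
    have hline_mem : ∀ τ ∈ Icc (0:ℝ) s, z + τ • v ∈ Metric.ball a r := by
      intro τ hτ
      apply hWball
      · rw [s3uu_add a v z hv]; exact hu
      · rw [s3gg_add a v z hv, abs_le]
        rw [abs_le] at hg hgs
        exact ⟨by linarith [hτ.1, hg.1], by linarith [hτ.2, hgs.2]⟩
    set φ : ℝ → ℝ := fun τ => f (z + τ • v) - τ / 2 with hφdef
    have hφd : ∀ τ ∈ Icc (0:ℝ) s, HasDerivAt φ (fderiv ℝ f (z + τ • v) v - 1/2) τ := by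
      intro τ hτ
      have hmem := hline_mem τ hτ
      have hFd : HasFDerivAt f (fderiv ℝ f (z + τ • v)) (z + τ • v) :=
        (hdiffV _ ((hΩ _ hmem).1)).hasFDerivAt
      have hline : HasDerivAt (fun τ : ℝ => z + τ • v) v τ := by
        simpa using ((hasDerivAt_id τ).smul_const v).const_add z
      have h1 : HasDerivAt (fun τ : ℝ => f (z + τ • v)) (fderiv ℝ f (z + τ • v) v) τ := by
        have := hFd.comp_hasDerivAt τ hline
        exact this
      have h2 : HasDerivAt (fun τ : ℝ => τ / 2) (1/2) τ := by
        simpa using (hasDerivAt_id τ).div_const 2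
      exact h1.sub h2
    have hd_nonneg : ∀ τ ∈ interior (Icc (0:ℝ) s), 0 ≤ deriv φ τ := by
      intro τ hτ
      rw [interior_Icc] at hτ
      have hτ' : τ ∈ Icc (0:ℝ) s := Ioo_subset_Icc_self hτ
      rw [(hφd τ hτ').deriv]
      have hmem := hline_mem τ hτ'
      have hΔ : ‖fderiv ℝ f (z + τ • v) - L'‖ < (2*M)⁻¹ := (hΩ _ hmem).2.1
      have h1 : |(fderiv ℝ f (z + τ • v) - L') v| ≤ ‖fderiv ℝ f (z + τ • v) - L'‖ * M := by
        have := (fderiv ℝ f (z + τ • v) - L').le_opNorm v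
        simpa [hMdef, Real.norm_eq_abs] using this
      have h2 : fderiv ℝ f (z + τ • v) v = 1 + (fderiv ℝ f (z + τ • v) - L') v := by
        simp [ContinuousLinearMap.sub_apply, hLv]
      rw [h2]
      have h3 : ‖fderiv ℝ f (z + τ • v) - L'‖ * M ≤ (2*M)⁻¹ * M :=
        mul_le_mul_of_nonneg_right hΔ.le hM.le
      have h4 : (2*M)⁻¹ * M = 1/2 := by field_simp
      have h6 : |(fderiv ℝ f (z + τ • v) - L') v| ≤ 1/2 := by
        calc |(fderiv ℝ f (z + τ • v) - L') v| ≤ ‖fderiv ℝ f (z + τ • v) - L'‖ * M := h1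
          _ ≤ (2*M)⁻¹ * M := h3
          _ = 1/2 := h4
      linarith [(abs_le.mp h6).1]
    have hmonoOn := monotoneOn_of_deriv_nonneg (convex_Icc 0 s)
      (fun τ hτ => ((hφd τ hτ).continuousAt.continuousWithinAt))
      (fun τ hτ => by
        rw [interior_Icc] at hτ
        exact ((hφd τ (Ioo_subset_Icc_self hτ)).differentiableAt.differentiableWithinAt))
      hd_nonneg
    have hres := hmonoOn (left_mem_Icc.mpr hs) (right_mem_Icc.mpr hs) hs
    simp only [hφdef, zero_smul, add_zero] at hres
    linarith [hres]
  -- the Lipschitz bound at the base level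
  have hbound : ∀ y ∈ Metric.ball a r, ‖fderiv ℝ f y‖ ≤ L := by
    intro y hy
    have h1 : ‖fderiv ℝ f y‖ ≤ ‖L'‖ + ‖fderiv ℝ f y - L'‖ := by
      calc ‖fderiv ℝ f y‖ = ‖L' + (fderiv ℝ f y - L')‖ := by rw [add_sub_cancel]
        _ ≤ _ := norm_add_le _ _
    have h2 := (hΩ y hy).2.1
    rw [hLdef]
    linarith
  have hbase : ∀ z, ‖s3uu a v z‖ ≤ δ → s3gg a v z = 0 → |f z| ≤ η / 8 := by
    intro z h1 h2
    have hz : z ∈ Metric.ball a r := hWball z h1 (by rw [h2]; simpa using hη.le)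
    have hlip := (convex_ball a r).norm_image_sub_le_of_norm_fderiv_le
      (fun y hy => hdiffV y (hΩ y hy).1) hbound haΩ hz
    rw [hfa, sub_zero, Real.norm_eq_abs] at hlip
    have hza : ‖z - a‖ = ‖s3uu a v z‖ := by
      rw [s3_decomp a v z, h2]; simp
    have hLδ : L * δ ≤ η / 8 := hLδ0
    calc |f z| ≤ L * ‖z - a‖ := hlip
      _ = L * ‖s3uu a v z‖ := by rw [hza]
      _ ≤ L * δ := mul_le_mul_of_nonneg_left h1 hL.le
      _ ≤ η / 8 := hLδ
  -- apply the slab lemma on the positive side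
  obtain ⟨hSp_conn, hSp_cl⟩ := s3slab a v f δ η hv hδ hη hfa hmono hbase
  -- and on the negative side
  have hmono' : ∀ z s, 0 ≤ s → ‖s3uu a (-v) z‖ ≤ δ → |s3gg a (-v) z| ≤ η →
      |s3gg a (-v) z + s| ≤ η → (fun z => -f z) z + s / 2 ≤ (fun z => -f z) (z + s • (-v)) := by
    intro z s hs h1 h2 h3
    rw [s3uu_neg] at h1
    rw [s3gg_neg] at h2 h3
    rw [abs_neg] at h2
    have hbeq : z + s • (-v) = z + (-s) • v := by module
    have hub : ‖s3uu a v (z + s • (-v))‖ ≤ δ := by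
      rw [hbeq, s3uu_add a v z hv]; exact h1
    have hgb : s3gg a v (z + s • (-v)) = s3gg a v z - s := by
      rw [hbeq, s3gg_add a v z hv]; ring
    have hb2 : (z + s • (-v)) + s • v = z := by module
    have hstep := hmono (z + s • (-v)) s hs hub
      (by rw [hgb, show s3gg a v z - s = -(-(s3gg a v z) + s) by ring, abs_neg]; exact h3)
      (by rw [hgb, show s3gg a v z - s + s = s3gg a v z by ring]; exact h2)
    rw [hb2] at hstep
    show -f z + s/2 ≤ -f (z + s • (-v))
    linarith
  have hbase' : ∀ z, ‖s3uu a (-v) z‖ ≤ δ → s3gg a (-v) z = 0 →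
      |(fun z => -f z) z| ≤ η / 8 := by
    intro z h1 h2
    rw [s3uu_neg] at h1
    rw [s3gg_neg, neg_eq_zero] at h2
    simpa [abs_neg] using hbase z h1 h2
  obtain ⟨hSm_conn, hSm_cl⟩ := s3slab a (-v) (fun z => -f z) δ η
    (neg_ne_zero.mpr hv) hδ hη (by simp [hfa]) hmono' hbase'
  -- the neighborhood W
  set W : Set (EuclideanSpace ℝ (Fin d)) :=
    {z | ‖s3uu a v z‖ < δ} ∩ {z | |s3gg a v z| < η} with hWdef
  have hWo : IsOpen W := by
    apply IsOpen.inter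
    · exact isOpen_lt ((s3uu_continuous a v).norm) continuous_const
    · exact isOpen_lt ((s3gg_continuous a v).abs) continuous_const
  have haW : a ∈ W := by
    constructor
    · show ‖s3uu a v a‖ < δ
      rw [s3uu_self]; simpa using hδ
    · show |s3gg a v a| < η
      rw [s3gg_self]; simpa using hη
  have hWΩ : W ⊆ Metric.ball a r := fun z hz => hWball z hz.1.le hz.2.le
  have hWA : W ⊆ A := fun z hz => (hΩ z (hWΩ hz)).2.2.1
  have hWε : W ⊆ Metric.ball a ε := fun z hz => hballsub (hWΩ hz)
  -- identification of W ∩ B with the negative slab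
  have hWB : W ∩ B = s3S a (-v) (fun z => -f z) δ η := by
    ext z
    simp only [s3S, mem_inter_iff, mem_setOf_eq, s3uu_neg, s3gg_neg, abs_neg,
      neg_pos]
    constructor
    · rintro ⟨⟨h1, h2⟩, h3⟩
      exact ⟨⟨h1, h2⟩, ((hΩ z (hWΩ ⟨h1, h2⟩)).2.2.2).mp h3⟩
    · rintro ⟨⟨h1, h2⟩, h3⟩
      exact ⟨⟨h1, h2⟩, ((hΩ z (hWΩ ⟨h1, h2⟩)).2.2.2).mpr h3⟩
  -- identification of W \ closure B with the positive slab
  have hfc : ContinuousOn f (Metric.ball a r) := fun y hy =>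
    ((hdiffV y (hΩ y hy).1).continuousAt.continuousWithinAt)
  have hWcB : W \ closure B = s3S a v f δ η := by
    apply Subset.antisymm
    · rintro z ⟨⟨h1, h2⟩, hzc⟩
      have h1 : ‖s3uu a v z‖ < δ := h1
      have h2 : |s3gg a v z| < η := h2
      refine ⟨⟨h1, h2⟩, ?_⟩
      have hznB : z ∉ B := fun h => hzc (subset_closure h)
      have hnn : ¬ f z < 0 := fun h => hznB (((hΩ z (hWΩ ⟨h1, h2⟩)).2.2.2).mpr h)
      rcases lt_trichotomy (f z) 0 with h | h | h
      · exact absurd h hnn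
      · exfalso
        apply hzc
        rw [Metric.mem_closure_iff]
        intro ρ hρ
        have hgz := abs_lt.mp h2
        set s : ℝ := min (ρ / (2 * M)) ((η + s3gg a v z) / 2) with hsdef
        have hs : 0 < s := lt_min (by positivity) (by linarith)
        have hbeq : z + (-s) • v + s • v = z := by module
        have hub : ‖s3uu a v (z + (-s) • v)‖ ≤ δ := by
          rw [s3uu_add a v z hv]; exact h1.le
        have hgb : s3gg a v (z + (-s) • v) = s3gg a v z - s := by
          rw [s3gg_add a v z hv]; ring
        have hs2 : s ≤ (η + s3gg a v z) / 2 := min_le_right _ _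
        have hstep := hmono (z + (-s) • v) s hs.le hub
          (by rw [hgb, abs_le]; constructor <;> linarith)
          (by rw [hgb, show s3gg a v z - s + s = s3gg a v z by ring]; exact h2.le)
        rw [hbeq, h] at hstep
        have hfb : f (z + (-s) • v) < 0 := by linarith
        have hbball : z + (-s) • v ∈ Metric.ball a r := by
          apply hWball
          · rw [s3uu_add a v z hv]; exact h1.le
          · rw [hgb, abs_le]; constructor <;> linarith
        refine ⟨z + (-s) • v, ((hΩ _ hbball).2.2.2).mpr hfb, ?_⟩
        rw [dist_eq_norm, show z - (z + (-s) • v) = s • v by module, norm_smul,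
          Real.norm_eq_abs, abs_of_pos hs]
        have : s * M ≤ (ρ / (2 * M)) * M :=
          mul_le_mul_of_nonneg_right (min_le_left _ _) hM.le
        rw [div_mul_eq_mul_div] at this
        have h2M : ρ * M / (2 * M) = ρ / 2 := by
          field_simp
        rw [h2M] at this
        linarith
      · exact h
    · rintro z ⟨⟨h1, h2⟩, h3⟩
      refine ⟨⟨h1, h2⟩, ?_⟩
      set O : Set (EuclideanSpace ℝ (Fin d)) := Metric.ball a r ∩ f ⁻¹' (Ioi 0) with hOdef
      have hOo : IsOpen O := hfc.isOpen_inter_preimage Metric.isOpen_ball isOpen_Ioi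
      have hzO : z ∈ O := ⟨hWΩ ⟨h1, h2⟩, h3⟩
      intro hc
      obtain ⟨y, hy1, hy2⟩ := (_root_.mem_closure_iff.mp hc) O hOo hzO
      have : f y < 0 := ((hΩ y hy1.1).2.2.2).mp hy2
      have : (0:ℝ) < f y := hy1.2
      linarith
  refine ⟨W, hWo, haW, hWA, hWε, ?_, ?_, ?_, ?_⟩
  · rw [hWcB]; exact hSp_conn
  · rw [hWcB]; exact hSp_cl
  · rw [hWB]; exact hSm_conn
  · rw [hWB]; exact hSm_cl

lemma s3frontier_cc {B : Set (EuclideanSpace ℝ (Fin d))} (hBo : IsOpen B)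
    (x : EuclideanSpace ℝ (Fin d)) :
    frontier (connectedComponentIn B x) ⊆ frontier B := by
  intro y hy
  have hCo : IsOpen (connectedComponentIn B x) := hBo.connectedComponentIn
  rw [hCo.frontier_eq] at hy
  rw [hBo.frontier_eq]
  refine ⟨closure_mono (connectedComponentIn_subset B x) hy.1, fun hyB => ?_⟩
  have hDo : IsOpen (connectedComponentIn B y) := hBo.connectedComponentIn
  have hyD : y ∈ connectedComponentIn B y := mem_connectedComponentIn hyB
  obtain ⟨w, hwD, hwC⟩ := _root_.mem_closure_iff.mp hy.1 _ hDo hyD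
  have h1 : connectedComponentIn B y = connectedComponentIn B w := connectedComponentIn_eq hwD
  have h2 : connectedComponentIn B x = connectedComponentIn B w := connectedComponentIn_eq hwC
  exact hy.2 (by rw [h2, ← h1]; exact hyD)

end S3Aux


set_option maxHeartbeats 1000000 in
/-- Let `A ⊆ ℝ^d` be a connected open set, and `B` a bounded open set with
`∂B ⊆ A`, whose boundary is `C¹` regular (locally a sublevel set of a `C¹`
function with nonvanishing differential), and such that the boundary of every
connected component of `B` is connected. Then `A \ closure B` is connected. -/
theorem stmt_3 (d : ℕ) (A B : Set (EuclideanSpace ℝ (Fin d)))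
    (hAo : IsOpen A) (hAc : IsConnected A)
    (hBo : IsOpen B) (hBb : Bornology.IsBounded B)
    (hBA : frontier B ⊆ A)
    (hreg : ∀ x ∈ frontier B, ∃ f : EuclideanSpace ℝ (Fin d) → ℝ,
      ContDiffAt ℝ 1 f x ∧ fderiv ℝ f x ≠ 0 ∧
      ∀ᶠ y in nhds x, (y ∈ B ↔ f y < 0))
    (hcc : ∀ x ∈ B, IsConnected (frontier (connectedComponentIn B x))) :
    IsConnected (A \ closure B) := by
  classical
  by_cases hBe : B = ∅
  · simpa [hBe] using hAc
  have LF := s3local hAo hBA hBo hreg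
  set U := A \ closure B with hUdef
  have hUo : IsOpen U := hAo.sdiff isClosed_closure
  -- localized version of LF
  have LFO : ∀ a ∈ frontier B, ∀ O : Set (EuclideanSpace ℝ (Fin d)), IsOpen O → a ∈ O →
      ∃ W, IsOpen W ∧ a ∈ W ∧ W ⊆ O ∧ W ⊆ A ∧
        IsPreconnected (W \ closure B) ∧ a ∈ closure (W \ closure B) ∧
        IsPreconnected (W ∩ B) ∧ a ∈ closure (W ∩ B) := by
    intro a ha O hO haO
    obtain ⟨ε, hε, hball⟩ := Metric.isOpen_iff.mp hO a haO
    obtain ⟨W, h1, h2, h3, h4, h5, h6, h7, h8⟩ := LF a ha ε hε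
    exact ⟨W, h1, h2, fun z hz => hball (h4 hz), h3, h5, h6, h7, h8⟩
  -- U is nonempty
  obtain ⟨b, hb⟩ := nonempty_iff_ne_empty.mpr hBe
  obtain ⟨a₀, ha₀⟩ := (hcc b hb).nonempty
  have ha₀f : a₀ ∈ frontier B := s3frontier_cc hBo b ha₀
  obtain ⟨W₀, hW₀o, haW₀, hW₀A, _, _, hW₀cl, _, _⟩ := LF a₀ ha₀f 1 one_pos
  have hW₀ne : (W₀ \ closure B).Nonempty := by
    rcases eq_empty_or_nonempty (W₀ \ closure B) with h | h
    · rw [h, closure_empty] at hW₀cl; exact absurd hW₀cl (notMem_empty _)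
    · exact h
  obtain ⟨x₀, hx₀W⟩ := hW₀ne
  have hx₀ : x₀ ∈ U := ⟨hW₀A hx₀W.1, hx₀W.2⟩
  set K := connectedComponentIn U x₀ with hKdef
  have hKU : K ⊆ U := connectedComponentIn_subset _ _
  have hKo : IsOpen K := hUo.connectedComponentIn
  -- claim 1 : near any point of closure K, the local outside-part lies in K
  have claim1 : ∀ (x : EuclideanSpace ℝ (Fin d)) (W : Set (EuclideanSpace ℝ (Fin d))),
      x ∈ closure K → IsOpen W → x ∈ W → W ⊆ A →
      IsPreconnected (W \ closure B) → W \ closure B ⊆ K := by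
    intro x W hx hWo hxW hWA hpre
    obtain ⟨k, hkW, hkK⟩ := _root_.mem_closure_iff.mp hx W hWo hxW
    have hkU : k ∈ U := hKU hkK
    have hkWB : k ∈ W \ closure B := ⟨hkW, hkU.2⟩
    have hsub : W \ closure B ⊆ U := fun z hz => ⟨hWA hz.1, hz.2⟩
    have h := hpre.subset_connectedComponentIn hkWB hsub
    rw [hKdef] at hkK ⊢
    rw [connectedComponentIn_eq hkK]
    exact h
  -- fact: if near y (a frontier point) the outside part lies in K, then y ∈ closure K
  have factCl : ∀ y ∈ frontier B, ∀ O : Set (EuclideanSpace ℝ (Fin d)), IsOpen O → y ∈ O →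
      (O \ closure B ⊆ K) → y ∈ closure K := by
    intro y hy O hO hyO hsub
    obtain ⟨W, hWo, hyW, hWO, hWA, hpre, hycl, _, _⟩ := LFO y hy O hO hyO
    exact closure_mono (fun z hz => hsub ⟨hWO hz.1, hz.2⟩) hycl
  -- the predicate
  set P : EuclideanSpace ℝ (Fin d) → Prop := fun z =>
    z ∈ K ∨ (z ∈ B ∧ (frontier (connectedComponentIn B z) ∩ closure K).Nonempty) ∨
    (z ∈ frontier B ∧ z ∈ closure K) with hPdef
  set G : Set (EuclideanSpace ℝ (Fin d)) := {z ∈ A | P z} with hGdef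
  have hfrB : ∀ z, z ∈ frontier B ↔ z ∈ closure B ∧ z ∉ B := by
    intro z; rw [hBo.frontier_eq]; exact Iff.rfl
  -- G is relatively open in A
  have open1 : ∀ z ∈ G, ∃ O, IsOpen O ∧ z ∈ O ∧ ∀ w, w ∈ A → w ∈ O → w ∈ G := by
    rintro z ⟨hzA, hzP⟩
    rcases hzP with hzK | ⟨hzB, hfr⟩ | ⟨hzf, hzcl⟩
    · exact ⟨K, hKo, hzK, fun w hwA hwK => ⟨hwA, Or.inl hwK⟩⟩
    · refine ⟨connectedComponentIn B z, hBo.connectedComponentIn,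
        mem_connectedComponentIn hzB, ?_⟩
      intro w hwA hwC
      refine ⟨hwA, Or.inr (Or.inl ⟨connectedComponentIn_subset _ _ hwC, ?_⟩)⟩
      rwa [← connectedComponentIn_eq hwC]
    · obtain ⟨W, hWo, hzW, hWA, hWb, hpre, hzcl', hpreB, hzclB⟩ := LF z hzf 1 one_pos
      have hsubK : W \ closure B ⊆ K := claim1 z W hzcl hWo hzW hWA hpre
      refine ⟨W, hWo, hzW, ?_⟩
      intro w hwA hwW
      refine ⟨hwA, ?_⟩
      by_cases hwcB : w ∈ closure B
      · by_cases hwB : w ∈ B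
        · have hWBsub : W ∩ B ⊆ connectedComponentIn B w :=
            hpreB.subset_connectedComponentIn ⟨hwW, hwB⟩ inter_subset_right
          have hzclC : z ∈ closure (connectedComponentIn B w) := closure_mono hWBsub hzclB
          have hznB : z ∉ B := ((hfrB z).mp hzf).2
          have hzfr : z ∈ frontier (connectedComponentIn B w) := by
            rw [(hBo.connectedComponentIn).frontier_eq]
            exact ⟨hzclC, fun h => hznB (connectedComponentIn_subset _ _ h)⟩
          exact Or.inr (Or.inl ⟨hwB, ⟨z, hzfr, hzcl⟩⟩)
        · have hwf : w ∈ frontier B := (hfrB w).mpr ⟨hwcB, hwB⟩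
          exact Or.inr (Or.inr ⟨hwf, factCl w hwf W hWo hwW hsubK⟩)
      · exact Or.inl (hsubK ⟨hwW, hwcB⟩)
  -- complement of G is relatively open in A
  have open2 : ∀ z ∈ A, z ∉ G → ∃ O, IsOpen O ∧ z ∈ O ∧ ∀ w, w ∈ A → w ∈ O → w ∉ G := by
    intro z hzA hzG
    have hznP : ¬ P z := fun h => hzG ⟨hzA, h⟩
    by_cases hzcB : z ∈ closure B
    · by_cases hzB : z ∈ B
      · -- z ∈ B
        have hfrz : ¬ (frontier (connectedComponentIn B z) ∩ closure K).Nonempty :=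
          fun h => hznP (Or.inr (Or.inl ⟨hzB, h⟩))
        refine ⟨connectedComponentIn B z, hBo.connectedComponentIn,
          mem_connectedComponentIn hzB, ?_⟩
        rintro w hwA hwC ⟨_, hwP⟩
        have hwB : w ∈ B := connectedComponentIn_subset _ _ hwC
        rcases hwP with hwK | ⟨_, hner⟩ | ⟨hwf, _⟩
        · exact (hKU hwK).2 (subset_closure hwB)
        · exact hfrz (by rwa [← connectedComponentIn_eq hwC] at hner)
        · exact ((hfrB w).mp hwf).2 hwB
      · -- z ∈ frontier B, z ∉ closure K
        have hzf : z ∈ frontier B := (hfrB z).mpr ⟨hzcB, hzB⟩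
        have hzncl : z ∉ closure K := fun h => hznP (Or.inr (Or.inr ⟨hzf, h⟩))
        obtain ⟨W, hWo, hzW, hWsub, hWA, hpre, hzcl', hpreB, hzclB⟩ :=
          LFO z hzf (closure K)ᶜ isClosed_closure.isOpen_compl hzncl
        have hWK : ∀ q, q ∈ W → q ∉ K := fun q hq hqK => hWsub hq (subset_closure hqK)
        refine ⟨W, hWo, hzW, ?_⟩
        rintro w hwA hwW ⟨_, hwP⟩
        rcases hwP with hwK | ⟨hwB, hner⟩ | ⟨hwf, hwcl⟩
        · exact hWK w hwW hwK
        · -- the clopen argument along the connected frontier of the component C of w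
          obtain ⟨x, hxfr, hxcl⟩ := hner
          have hCfr_conn := (hcc w hwB).isPreconnected
          have hfrCB : frontier (connectedComponentIn B w) ⊆ frontier B :=
            s3frontier_cc hBo w
          have hWBsub : W ∩ B ⊆ connectedComponentIn B w :=
            hpreB.subset_connectedComponentIn ⟨hwW, hwB⟩ inter_subset_right
          have hzclC : z ∈ closure (connectedComponentIn B w) := closure_mono hWBsub hzclB
          have hzfrC : z ∈ frontier (connectedComponentIn B w) := by
            rw [(hBo.connectedComponentIn).frontier_eq]
            exact ⟨hzclC, fun h => hzB (connectedComponentIn_subset _ _ h)⟩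
          have hWy : ∀ y ∈ frontier (connectedComponentIn B w) ∩ closure K,
              ∃ Wy : Set (EuclideanSpace ℝ (Fin d)), IsOpen Wy ∧ y ∈ Wy ∧
                (Wy \ closure B ⊆ K) := by
            rintro y ⟨hy1, hy2⟩
            obtain ⟨Wy, hWyo, hyWy, hWyA, _, hWypre, hWycl, _, _⟩ :=
              LF y (hfrCB hy1) 1 one_pos
            exact ⟨Wy, hWyo, hyWy, claim1 y Wy hy2 hWyo hyWy hWyA hWypre⟩
          choose! Wy hWyo hyWy hWyK using hWy
          set O1 : Set (EuclideanSpace ℝ (Fin d)) :=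
            ⋃ (y : EuclideanSpace ℝ (Fin d))
              (hy : y ∈ frontier (connectedComponentIn B w) ∩ closure K), Wy y with hO1def
          have hO1o : IsOpen O1 := isOpen_biUnion fun y hy => hWyo y hy
          have hcover : frontier (connectedComponentIn B w) ⊆ O1 ∪ (closure K)ᶜ := by
            intro y hy
            by_cases h : y ∈ closure K
            · exact Or.inl (mem_biUnion ⟨hy, h⟩ (hyWy y ⟨hy, h⟩))
            · exact Or.inr h
          have hne1 : (frontier (connectedComponentIn B w) ∩ O1).Nonempty :=
            ⟨x, hxfr, mem_biUnion ⟨hxfr, hxcl⟩ (hyWy x ⟨hxfr, hxcl⟩)⟩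
          have hne2 : (frontier (connectedComponentIn B w) ∩ (closure K)ᶜ).Nonempty :=
            ⟨z, hzfrC, hzncl⟩
          obtain ⟨y, hyfr, hyO1, hyncl⟩ := hCfr_conn O1 (closure K)ᶜ hO1o
            isClosed_closure.isOpen_compl hcover hne1 hne2
          rw [hO1def, mem_iUnion₂] at hyO1
          obtain ⟨y', hy', hyW'⟩ := hyO1
          exact hyncl (factCl y (hfrCB hyfr) (Wy y') (hWyo y' hy') hyW' (hWyK y' hy'))
        · -- w ∈ frontier B with w ∈ closure K : contradiction since W ∩ K = ∅
          obtain ⟨Ww, hWwo, hwWw, hWwsub, hWwA, hWwpre, hwcl', _, _⟩ := LFO w hwf W hWo hwW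
          have hsubK : Ww \ closure B ⊆ K := claim1 w Ww hwcl hWwo hwWw hWwA hWwpre
          have hne : (Ww \ closure B).Nonempty := by
            rcases eq_empty_or_nonempty (Ww \ closure B) with h | h
            · rw [h, closure_empty] at hwcl'; exact absurd hwcl' (notMem_empty _)
            · exact h
          obtain ⟨q, hq⟩ := hne
          exact hWK q (hWwsub hq.1) (hsubK hq)
    · -- z ∈ U
      have hzU : z ∈ U := ⟨hzA, hzcB⟩
      refine ⟨connectedComponentIn U z, hUo.connectedComponentIn,
        mem_connectedComponentIn hzU, ?_⟩
      rintro w hwA hwC ⟨_, hwP⟩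
      have hwU : w ∈ U := connectedComponentIn_subset _ _ hwC
      rcases hwP with hwK | ⟨hwB, _⟩ | ⟨hwf, _⟩
      · apply hznP
        left
        rw [hKdef] at hwK ⊢
        have h1 : connectedComponentIn U x₀ = connectedComponentIn U w :=
          connectedComponentIn_eq hwK
        have h2 : connectedComponentIn U z = connectedComponentIn U w :=
          connectedComponentIn_eq hwC
        rw [h1, ← h2]
        exact mem_connectedComponentIn hzU
      · exact hwU.2 (subset_closure hwB)
      · exact hwU.2 (frontier_subset_closure hwf)
  -- conclude by connectedness of A
  have hAG : ∀ z ∈ A, z ∈ G := by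
    by_contra hcon
    push_neg at hcon
    obtain ⟨z₁, hz₁A, hz₁G⟩ := hcon
    choose! O1 hO1o hzO1 hO1sub using open1
    choose! O2 hO2o hzO2 hO2sub using open2
    set V₁ := ⋃ z ∈ G, O1 z with hV₁def
    set V₂ := ⋃ (z : EuclideanSpace ℝ (Fin d)) (h : z ∈ A ∧ z ∉ G), O2 z with hV₂def
    have hV₁o : IsOpen V₁ := isOpen_biUnion fun z hz => hO1o z hz
    have hV₂o : IsOpen V₂ := isOpen_biUnion fun z hz => hO2o z hz.1 hz.2
    have hcov : A ⊆ V₁ ∪ V₂ := by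
      intro z hzA
      by_cases h : z ∈ G
      · exact Or.inl (mem_biUnion h (hzO1 z h))
      · exact Or.inr (mem_biUnion ⟨hzA, h⟩ (hzO2 z hzA h))
    have hx₀G : x₀ ∈ G := ⟨hx₀.1, Or.inl (mem_connectedComponentIn hx₀)⟩
    have hne₁ : (A ∩ V₁).Nonempty := ⟨x₀, hx₀.1, mem_biUnion hx₀G (hzO1 x₀ hx₀G)⟩
    have hne₂ : (A ∩ V₂).Nonempty :=
      ⟨z₁, hz₁A, mem_biUnion ⟨hz₁A, hz₁G⟩ (hzO2 z₁ hz₁A hz₁G)⟩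
    obtain ⟨q, hqA, hqV₁, hqV₂⟩ := hAc.isPreconnected V₁ V₂ hV₁o hV₂o hcov hne₁ hne₂
    rw [hV₁def, mem_iUnion₂] at hqV₁
    rw [hV₂def, mem_iUnion₂] at hqV₂
    obtain ⟨za, hza, hqa⟩ := hqV₁
    obtain ⟨zb, hzb, hqb⟩ := hqV₂
    exact hO2sub zb hzb.1 hzb.2 q hqA hqb (hO1sub za hza q hqA hqa)
  -- therefore U ⊆ K, so U = K is connected
  have hUK : U ⊆ K := by
    intro u hu
    obtain ⟨_, hP⟩ := hAG u hu.1
    rcases hP with h | ⟨h, _⟩ | ⟨h, _⟩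
    · exact h
    · exact absurd (subset_closure h) hu.2
    · exact absurd (frontier_subset_closure h) hu.2
  have hUKeq : U = K := Subset.antisymm hUK hKU
  show IsConnected U
  rw [hUKeq, hKdef]
  exact isConnected_connectedComponentIn_iff.mpr hx₀
end

section
/- Let ω be a bounded open set, p a natural number, f ∈ L^p(ω), and ω₊, ω₋ ⊆ ω disjoint measurable sets with |ω| = |ω₊| + |ω₋|. Then ∫₀^{|ω₊|} (f†)^p ds + (−1)^p ∫₀^{|ω₋|} ((−f)†)^p ds = ∫_ω f^p, where f†(s) = (f⁺)*(s) − (f⁻)*(|ω| − s). -/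
/-
For `0 ≤ s ≤ |ω|` off the single point `s = |{f > 0}|`, one of `(f⁺)*(s)` and `(f⁻)*(|ω| - s)`
vanishes, because `|{f > 0}| + |{f < 0}| ≤ |ω|`. Hence almost everywhere
`(f†)^p(s) = ((f⁺)*)^p(s) + (-1)^p ((f⁻)*)^p(|ω| - s)`, and symmetrically for `(-f)†`.
Integrating over `[0, |ω₊|]` and `[0, |ω₋|]`, where `|ω₊| + |ω₋| = |ω|`, the reflected pieces
complete each other to integrals over `[0, |ω|]`; by equimeasurability (the layer-cake formula)
these equal `∫_ω (f^±)^p`, and `f^p = (f⁺)^p + (-1)^p (f⁻)^p` concludes.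
-/

open MeasureTheory Set

/-- The decreasing rearrangement of `g` on `ω`: the generalized inverse of the
distribution function of `g`. -/
noncomputable def decRearr {α : Type*} [MeasurableSpace α] (μ : Measure α)
    (ω : Set α) (g : α → ℝ) (s : ℝ) : ℝ :=
  sInf {t : ℝ | (μ {x | x ∈ ω ∧ t < g x}).toReal < s}

/-- Talenti's rearrangement `f†(s) = (f⁺)*(s) − (f⁻)*(|ω| − s)`. -/
noncomputable def talenti {α : Type*} [MeasurableSpace α] (μ : Measure α)
    (ω : Set α) (f : α → ℝ) (s : ℝ) : ℝ :=
  decRearr μ ω (fun x => max (f x) 0) s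
    - decRearr μ ω (fun x => max (-f x) 0) ((μ ω).toReal - s)

open Filter Topology
open scoped ENNReal Interval

-- `decRearr μ ω g s` is definitionally `sInf {t | distribFun μ ω g t < s}`.
noncomputable def distribFun {α : Type*} [MeasurableSpace α] (μ : Measure α) (ω : Set α)
    (g : α → ℝ) (t : ℝ) : ℝ :=
  (μ {x | x ∈ ω ∧ t < g x}).toReal

section

variable {α : Type*} [MeasurableSpace α] {μ : Measure α} {ω : Set α} {g : α → ℝ} {s t : ℝ}

lemma ofReal_distribFun (hω : μ ω ≠ ∞) (t : ℝ) :
    ENNReal.ofReal (distribFun μ ω g t) = μ {x | x ∈ ω ∧ t < g x} :=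
  ENNReal.ofReal_toReal (measure_ne_top_of_subset (fun _ hx => hx.1) hω)

lemma distribFun_le (hω : μ ω ≠ ∞) (t : ℝ) : distribFun μ ω g t ≤ (μ ω).toReal :=
  ENNReal.toReal_mono hω (measure_mono fun _ hx => hx.1)

lemma antitone_distribFun (hω : μ ω ≠ ∞) : Antitone (distribFun μ ω g) := fun _ _ h =>
  ENNReal.toReal_mono (measure_ne_top_of_subset (fun _ hx => hx.1) hω)
    (measure_mono fun _ hx => ⟨hx.1, h.trans_lt hx.2⟩)

lemma measure_superlevel_eq_restrict (hg : Measurable g) (t : ℝ) :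
    μ {x | x ∈ ω ∧ t < g x} = μ.restrict ω {x | t < g x} := by
  rw [Measure.restrict_apply (measurableSet_lt measurable_const hg), inter_comm]
  rfl

lemma tendsto_distribFun_atTop (hω : μ ω ≠ ∞) (hg : Measurable g) :
    Tendsto (distribFun μ ω g) atTop (𝓝 0) := by
  have : IsFiniteMeasure (μ.restrict ω) := isFiniteMeasure_restrict.2 hω
  have h := tendsto_measure_iInter_atTop (μ := μ.restrict ω) (s := fun t : ℝ => {x | t < g x})
    (fun t => (measurableSet_lt measurable_const hg).nullMeasurableSet)
    (fun _ _ h _ hx => h.trans_lt hx) ⟨0, measure_ne_top _ _⟩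
  have hempty : (⋂ t : ℝ, {x | t < g x}) = ∅ :=
    eq_empty_of_forall_notMem fun x hx => lt_irrefl (g x) (mem_iInter.1 hx (g x))
  rw [hempty, measure_empty] at h
  have h' := (ENNReal.tendsto_toReal ENNReal.zero_ne_top).comp h
  rw [ENNReal.toReal_zero] at h'
  exact h'.congr fun t => congrArg ENNReal.toReal (measure_superlevel_eq_restrict hg t).symm

lemma exists_distribFun_lt (hω : μ ω ≠ ∞) (hg : Measurable g) (hs : 0 < s) :
    ∃ t, distribFun μ ω g t < s :=
  ((tendsto_distribFun_atTop hω hg).eventually (gt_mem_nhds hs)).exists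

lemma distribFun_posPart_add_negPart_le (hω : μ ω ≠ ∞) (hg : Measurable g) :
    distribFun μ ω (fun x => max (g x) 0) 0 + distribFun μ ω (fun x => max (-g x) 0) 0
      ≤ (μ ω).toReal := by
  have hpos : {x | x ∈ ω ∧ (0 : ℝ) < max (g x) 0} = ω ∩ {x | 0 < g x} := by
    ext x; simp
  have hneg : {x | x ∈ ω ∧ (0 : ℝ) < max (-g x) 0} ⊆ ω \ {x | 0 < g x} := by
    intro x hx
    simp only [mem_ofPred_eq, lt_max_iff, lt_self_iff_false, or_false, neg_pos] at hx
    exact ⟨hx.1, hx.2.not_gt⟩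
  have hsplit := measure_inter_add_sdiff (μ := μ) ω
    (measurableSet_lt (measurable_const (a := (0 : ℝ))) hg)
  have hfin : ∀ {S}, S ⊆ ω → μ S ≠ ∞ := fun hS => measure_ne_top_of_subset hS hω
  rw [distribFun, distribFun, ← ENNReal.toReal_add (hfin fun _ hx => hx.1)
    (hfin fun _ hx => hx.1), hpos, ← hsplit]
  exact ENNReal.toReal_mono (hsplit ▸ hω) (add_le_add_right (measure_mono hneg) _)

lemma nonneg_of_distribFun_lt (hg0 : 0 ≤ g) (hs : s ≤ (μ ω).toReal)
    (ht : distribFun μ ω g t < s) : 0 ≤ t := by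
  by_contra! hneg
  have hall : {x | x ∈ ω ∧ t < g x} = ω :=
    sep_eq_self_iff_mem_true.2 fun x _ => hneg.trans_le (hg0 x)
  rw [distribFun, hall] at ht
  exact ht.not_ge hs

lemma decRearr_nonneg (hg0 : 0 ≤ g) (hs : s ≤ (μ ω).toReal) : 0 ≤ decRearr μ ω g s :=
  Real.sInf_nonneg fun _ ht => nonneg_of_distribFun_lt hg0 hs ht

lemma decRearr_le (hg0 : 0 ≤ g) (hs : s ≤ (μ ω).toReal) (ht : distribFun μ ω g t < s) :
    decRearr μ ω g s ≤ t :=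
  csInf_le ⟨0, fun _ hu => nonneg_of_distribFun_lt hg0 hs hu⟩ ht

lemma le_decRearr (hω : μ ω ≠ ∞) (hg : Measurable g) (hs : 0 < s)
    (hst : s ≤ distribFun μ ω g t) : t ≤ decRearr μ ω g s :=
  le_csInf (exists_distribFun_lt hω hg hs) fun _ hu =>
    le_of_not_gt fun hut => (hst.trans (antitone_distribFun hω hut.le)).not_gt hu

lemma antitoneOn_decRearr (hω : μ ω ≠ ∞) (hg : Measurable g) (hg0 : 0 ≤ g) :
    AntitoneOn (decRearr μ ω g) (Ioc 0 (μ ω).toReal) := fun _ hs _ hs' hss' =>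
  csInf_le_csInf ⟨0, fun _ hu => nonneg_of_distribFun_lt hg0 hs'.2 hu⟩
    (exists_distribFun_lt hω hg hs.1) fun _ hu => hu.trans_le hss'

lemma restrict_superlevel_decRearr_le (hω : μ ω ≠ ∞) (hg0 : 0 ≤ g) (t : ℝ) :
    volume.restrict (Ioc 0 (μ ω).toReal) {s | t < decRearr μ ω g s}
      ≤ μ {x | x ∈ ω ∧ t < g x} := by
  rw [Measure.restrict_apply' measurableSet_Ioc, ← ofReal_distribFun hω, ← sub_zero
    (distribFun μ ω g t), ← Real.volume_Ioc]
  refine measure_mono fun s ⟨hts, hs⟩ => ⟨hs.1, le_of_not_gt fun hlt => ?_⟩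
  exact (decRearr_le hg0 hs.2 hlt).not_gt hts

lemma measure_superlevel_le_restrict_decRearr (hω : μ ω ≠ ∞) (hg : Measurable g) (t : ℝ) :
    μ {x | x ∈ ω ∧ t < g x}
      ≤ volume.restrict (Ioc 0 (μ ω).toReal) {s | t ≤ decRearr μ ω g s} := by
  rw [Measure.restrict_apply' measurableSet_Ioc, ← ofReal_distribFun hω, ← sub_zero
    (distribFun μ ω g t), ← Real.volume_Ioc]
  exact measure_mono fun s hs =>
    ⟨le_decRearr hω hg hs.1 hs.2, hs.1, hs.2.trans (distribFun_le hω t)⟩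

lemma aemeasurable_decRearr (hω : μ ω ≠ ∞) (hg : Measurable g) (hg0 : 0 ≤ g) :
    AEMeasurable (decRearr μ ω g) (volume.restrict (Ioc 0 (μ ω).toReal)) :=
  aemeasurable_restrict_of_antitoneOn measurableSet_Ioc (antitoneOn_decRearr hω hg hg0)

/- The superlevel sets of `decRearr μ ω g` are squeezed between the strict and the non-strict
superlevel sets of `g`, which the layer-cake formula does not distinguish. -/
theorem lintegral_decRearr_rpow (hω : μ ω ≠ ∞) (hg : Measurable g) (hg0 : 0 ≤ g)
    {q : ℝ} (hq : 0 < q) :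
    ∫⁻ s in Ioc 0 (μ ω).toReal, ENNReal.ofReal (decRearr μ ω g s ^ q)
      = ∫⁻ x in ω, ENNReal.ofReal (g x ^ q) ∂μ := by
  have hnonneg : 0 ≤ᵐ[volume.restrict (Ioc 0 (μ ω).toReal)] decRearr μ ω g :=
    (ae_restrict_iff' measurableSet_Ioc).2 (ae_of_all _ fun _ hs => decRearr_nonneg hg0 hs.2)
  have hmeas := aemeasurable_decRearr hω hg hg0
  apply le_antisymm
  · rw [lintegral_rpow_eq_lintegral_meas_lt_mul _ hnonneg hmeas hq,
      lintegral_rpow_eq_lintegral_meas_lt_mul _ (ae_of_all _ hg0) hg.aemeasurable hq]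
    gcongr with t
    rw [← measure_superlevel_eq_restrict hg]
    exact restrict_superlevel_decRearr_le hω hg0 t
  · rw [lintegral_rpow_eq_lintegral_meas_le_mul _ hnonneg hmeas hq,
      lintegral_rpow_eq_lintegral_meas_lt_mul _ (ae_of_all _ hg0) hg.aemeasurable hq]
    gcongr with t
    rw [← measure_superlevel_eq_restrict hg]
    exact measure_superlevel_le_restrict_decRearr hω hg t

variable {p : ℕ}

lemma integrable_pow_of_memLp_of_nonneg {ν : Measure α} (hg : MemLp g p ν) (hp : p ≠ 0)
    (hg0 : 0 ≤ g) : Integrable (fun x => g x ^ p) ν :=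
  (hg.integrable_norm_pow hp).congr (ae_of_all _ fun x => by simp [abs_of_nonneg (hg0 x)])

lemma lintegral_decRearr_pow (hω : μ ω ≠ ∞) (hg : Measurable g) (hg0 : 0 ≤ g) (hp : p ≠ 0) :
    ∫⁻ s in Ioc 0 (μ ω).toReal, ENNReal.ofReal (decRearr μ ω g s ^ p)
      = ∫⁻ x in ω, ENNReal.ofReal (g x ^ p) ∂μ := by
  simpa only [Real.rpow_natCast] using
    lintegral_decRearr_rpow hω hg hg0 (Nat.cast_pos.2 (Nat.pos_of_ne_zero hp))

lemma integrableOn_decRearr_pow (hω : μ ω ≠ ∞) (hg : Measurable g) (hg0 : 0 ≤ g)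
    (hgp : MemLp g p (μ.restrict ω)) (hp : p ≠ 0) :
    IntegrableOn (fun s => decRearr μ ω g s ^ p) (Ioc 0 (μ ω).toReal) := by
  refine ⟨((aemeasurable_decRearr hω hg hg0).pow_const p).aestronglyMeasurable, ?_⟩
  rw [hasFiniteIntegral_iff_ofReal ((ae_restrict_iff' measurableSet_Ioc).2
    (ae_of_all _ fun s hs => pow_nonneg (decRearr_nonneg hg0 hs.2) p)),
    lintegral_decRearr_pow hω hg hg0 hp]
  exact (integrable_pow_of_memLp_of_nonneg hgp hp hg0).lintegral_lt_top

lemma intervalIntegrable_decRearr_pow (hω : μ ω ≠ ∞) (hg : Measurable g) (hg0 : 0 ≤ g)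
    (hgp : MemLp g p (μ.restrict ω)) (hp : p ≠ 0) {a b : ℝ} (ha : 0 ≤ a) (hab : a ≤ b)
    (hb : b ≤ (μ ω).toReal) :
    IntervalIntegrable (fun s => decRearr μ ω g s ^ p) volume a b :=
  (intervalIntegrable_iff_integrableOn_Ioc_of_le hab).2
    ((integrableOn_decRearr_pow hω hg hg0 hgp hp).mono_set (Ioc_subset_Ioc ha hb))

lemma intervalIntegral_decRearr_pow (hω : μ ω ≠ ∞) (hg : Measurable g) (hg0 : 0 ≤ g)
    (hp : p ≠ 0) :
    ∫ s in 0..(μ ω).toReal, decRearr μ ω g s ^ p = ∫ x in ω, g x ^ p ∂μ := by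
  rw [intervalIntegral.integral_of_le ENNReal.toReal_nonneg,
    integral_eq_lintegral_of_nonneg_ae ((ae_restrict_iff' measurableSet_Ioc).2
      (ae_of_all _ fun s hs => pow_nonneg (decRearr_nonneg hg0 hs.2) p))
      ((aemeasurable_decRearr hω hg hg0).pow_const p).aestronglyMeasurable,
    integral_eq_lintegral_of_nonneg_ae (ae_of_all _ fun x => pow_nonneg (hg0 x) p)
      (hg.pow_const p).aestronglyMeasurable, lintegral_decRearr_pow hω hg hg0 hp]

lemma sub_pow_of_eq_zero_or_eq_zero {R : Type*} [CommRing R] {a b : R} (hp : p ≠ 0)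
    (h : a = 0 ∨ b = 0) : (a - b) ^ p = a ^ p + (-1) ^ p * b ^ p := by
  rcases h with rfl | rfl
  · rw [zero_sub, neg_pow, zero_pow hp, zero_add]
  · rw [sub_zero, zero_pow hp, mul_zero, add_zero]

variable {f : α → ℝ}

lemma decRearr_posPart_eq_zero_or (hω : μ ω ≠ ∞) (hf : Measurable f)
    (hs : s ∈ Icc 0 (μ ω).toReal) (hs' : s ≠ distribFun μ ω (fun x => max (f x) 0) 0) :
    decRearr μ ω (fun x => max (f x) 0) s = 0
      ∨ decRearr μ ω (fun x => max (-f x) 0) ((μ ω).toReal - s) = 0 := by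
  have hpos : (0 : α → ℝ) ≤ fun x => max (f x) 0 := fun x => le_max_right _ _
  have hneg : (0 : α → ℝ) ≤ fun x => max (-f x) 0 := fun x => le_max_right _ _
  rcases hs'.lt_or_gt with hlt | hgt
  · have hsum := distribFun_posPart_add_negPart_le hω hf
    have hM : (μ ω).toReal - s ≤ (μ ω).toReal := by linarith [hs.1]
    exact .inr (le_antisymm (decRearr_le hneg hM (by linarith)) (decRearr_nonneg hneg hM))
  · exact .inl (le_antisymm (decRearr_le hpos hs.2 hgt) (decRearr_nonneg hpos hs.2))

lemma intervalIntegral_talenti_pow (hω : μ ω ≠ ∞) (hf : Measurable f)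
    (hfp : MemLp f p (μ.restrict ω)) (hp : p ≠ 0) {a b : ℝ} (ha : 0 ≤ a) (hb : 0 ≤ b)
    (hab : a + b = (μ ω).toReal) :
    ∫ s in 0..a, talenti μ ω f s ^ p
      = (∫ s in 0..a, decRearr μ ω (fun x => max (f x) 0) s ^ p)
        + (-1) ^ p * ((∫ s in 0..(μ ω).toReal, decRearr μ ω (fun x => max (-f x) 0) s ^ p)
          - ∫ s in 0..b, decRearr μ ω (fun x => max (-f x) 0) s ^ p) := by
  set M := (μ ω).toReal
  set u := decRearr μ ω (fun x => max (f x) 0)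
  set v := decRearr μ ω (fun x => max (-f x) 0)
  have hv : ∀ c d, 0 ≤ c → c ≤ d → d ≤ M → IntervalIntegrable (fun s => v s ^ p) volume c d :=
    fun _ _ => intervalIntegrable_decRearr_pow hω (hf.neg.max measurable_const)
      (fun x => le_max_right _ _) hfp.neg_part hp
  have hvr : IntervalIntegrable (fun s => v (M - s) ^ p) volume 0 a := by
    simpa [show M - b = a by linarith] using
      ((hv b M hb (by linarith) le_rfl).comp_sub_left M).symm
  have hsplit :
      ∀ᵐ s, s ∈ Ι 0 a → talenti μ ω f s ^ p = u s ^ p + (-1) ^ p * v (M - s) ^ p := by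
    filter_upwards [Measure.ae_ne volume (distribFun μ ω (fun x => max (f x) 0) 0)]
      with s hs hsa
    rw [uIoc_of_le ha] at hsa
    exact sub_pow_of_eq_zero_or_eq_zero hp
      (decRearr_posPart_eq_zero_or hω hf ⟨hsa.1.le, by linarith [hsa.2]⟩ hs)
  have hu : IntervalIntegrable (fun s => u s ^ p) volume 0 a :=
    intervalIntegrable_decRearr_pow hω (hf.max measurable_const) (fun x => le_max_right _ _)
      hfp.pos_part hp le_rfl ha (by linarith)
  rw [intervalIntegral.integral_congr_ae hsplit, intervalIntegral.integral_add hu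
    (hvr.const_mul _), intervalIntegral.integral_const_mul,
    intervalIntegral.integral_comp_sub_left (fun s => v s ^ p), sub_zero,
    show M - a = b by linarith, intervalIntegral.integral_interval_sub_left
      (hv 0 M le_rfl ENNReal.toReal_nonneg le_rfl) (hv 0 b le_rfl hb (by linarith))]

lemma setIntegral_pow_eq_decRearr (hω : μ ω ≠ ∞) (hf : Measurable f)
    (hfp : MemLp f p (μ.restrict ω)) (hp : p ≠ 0) :
    ∫ x in ω, f x ^ p ∂μ
      = (∫ s in 0..(μ ω).toReal, decRearr μ ω (fun x => max (f x) 0) s ^ p)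
        + (-1) ^ p * ∫ s in 0..(μ ω).toReal, decRearr μ ω (fun x => max (-f x) 0) s ^ p := by
  have hpos : (0 : α → ℝ) ≤ fun x => max (f x) 0 := fun x => le_max_right _ _
  have hneg : (0 : α → ℝ) ≤ fun x => max (-f x) 0 := fun x => le_max_right _ _
  have hmneg : Measurable fun x => max (-f x) 0 := hf.neg.max measurable_const
  rw [intervalIntegral_decRearr_pow hω (hf.max measurable_const) hpos hp,
    intervalIntegral_decRearr_pow hω hmneg hneg hp,
    ← integral_const_mul, ← integral_add
      (integrable_pow_of_memLp_of_nonneg hfp.pos_part hp hpos)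
      ((integrable_pow_of_memLp_of_nonneg hfp.neg_part hp hneg).const_mul _)]
  refine integral_congr_ae (ae_of_all _ fun x => ?_)
  dsimp only
  conv_lhs => rw [← max_zero_sub_max_neg_zero_eq_self (f x)]
  refine sub_pow_of_eq_zero_or_eq_zero hp ?_
  rcases le_total (f x) 0 with h | h
  · exact .inl (max_eq_right h)
  · exact .inr (max_eq_right (neg_nonpos.2 h))

end

theorem stmt_5_general (d : ℕ) (p : ℕ) (ω : Set (EuclideanSpace ℝ (Fin d)))
    (hωb : Bornology.IsBounded ω)
    (f : EuclideanSpace ℝ (Fin d) → ℝ) (hf : Measurable f)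
    (hfp : MemLp f p (volume.restrict ω))
    (ωp ωm : Set (EuclideanSpace ℝ (Fin d)))
    (hvol : volume ω = volume ωp + volume ωm) :
    (∫ s in (0 : ℝ)..(volume ωp).toReal, (talenti volume ω f s) ^ p)
      + (-1 : ℝ) ^ p *
        ∫ s in (0 : ℝ)..(volume ωm).toReal, (talenti volume ω (fun x => -f x) s) ^ p
      = ∫ x in ω, (f x) ^ p := by
  have hω : volume ω ≠ ∞ := hωb.measure_lt_top.ne
  have hsum : (volume ωp).toReal + (volume ωm).toReal = (volume ω).toReal := by
    obtain ⟨hωp, hωm⟩ := ENNReal.add_ne_top.1 (hvol ▸ hω)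
    rw [hvol, ENNReal.toReal_add hωp hωm]
  rcases eq_or_ne p 0 with rfl | hp
  · simp [measureReal_def, hsum]
  have hneg := intervalIntegral_talenti_pow (f := fun x => -f x) hω hf.neg hfp.neg hp
    ENNReal.toReal_nonneg ENNReal.toReal_nonneg ((add_comm _ _).trans hsum)
  simp only [neg_neg] at hneg
  rw [intervalIntegral_talenti_pow hω hf hfp hp ENNReal.toReal_nonneg ENNReal.toReal_nonneg
    hsum, hneg, setIntegral_pow_eq_decRearr hω hf hfp hp]
  have hsq : (-1 : ℝ) ^ p * (-1) ^ p = 1 := by rw [← mul_pow]; norm_num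
  linear_combination
    ((∫ s in (0 : ℝ)..(volume ω).toReal, decRearr volume ω (fun x => max (f x) 0) s ^ p)
      - ∫ s in (0 : ℝ)..(volume ωp).toReal, decRearr volume ω (fun x => max (f x) 0) s ^ p)
      * hsq

/-- If `ω₊, ω₋ ⊆ ω` are disjoint measurable sets with `|ω| = |ω₊| + |ω₋|` and
`f ∈ L^p(ω)` with `p` a natural number, then
`∫₀^{|ω₊|} (f†)^p + (−1)^p ∫₀^{|ω₋|} ((−f)†)^p = ∫_ω f^p`. -/
theorem stmt_5 (d : ℕ) (p : ℕ) (ω : Set (EuclideanSpace ℝ (Fin d)))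
    (hωo : IsOpen ω) (hωb : Bornology.IsBounded ω)
    (f : EuclideanSpace ℝ (Fin d) → ℝ) (hf : Measurable f)
    (hfp : MemLp f p (volume.restrict ω))
    (ωp ωm : Set (EuclideanSpace ℝ (Fin d)))
    (hps : ωp ⊆ ω) (hms : ωm ⊆ ω)
    (hpm : MeasurableSet ωp) (hmm : MeasurableSet ωm)
    (hdisj : Disjoint ωp ωm)
    (hvol : volume ω = volume ωp + volume ωm) :
    (∫ s in (0 : ℝ)..(volume ωp).toReal, (talenti volume ω f s) ^ p)
      + (-1 : ℝ) ^ p *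
        ∫ s in (0 : ℝ)..(volume ωm).toReal, (talenti volume ω (fun x => -f x) s) ^ p
      = ∫ x in ω, (f x) ^ p :=
  stmt_5_general d p ω hωb f hf hfp ωp ωm hvol
end

section
/- Let ω be a bounded open set and f ∈ L^∞(ω). Then the signed Schwarz symmetrization f* (defined via the generalized inverse of the distribution function of f, allowing negative values) and the Talenti symmetrization f† (defined by f†(s) = (f⁺)*(s) − (f⁻)*(|ω|−s)) coincide almost everywhere on [0,|ω|). -/
/-!
Write `F t = |{f > t}|` and `H t = |{f ≥ t}|`. For `0 ≤ s ≤ |ω|` one has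
`(g⁺)*(s) = max (g*(s)) 0`, so `f†(s) = max (f*(s)) 0 - max ((-f)*(|ω| - s)) 0`, and it suffices
that `(-f)*(|ω| - s) = -f*(s)`. Since `|{-f > t}| = |ω| - H(-t)`, the left side is
`-sup {u | s < H u}`, while `f*(s) = inf {t | F t < s}`.
As `F ≤ H` and `H u ≤ F t` for `t < u`, these two generalized inverses can only differ if
`H q ≤ s ≤ F q`, i.e. `F q = s`, for every `q` strictly between them, in particular for a rational
`q`; this happens for countably many `s` only.
-/

open MeasureTheory Set

open Filter Topology
open scoped ENNReal

theorem IsUpperSet.sInf_inter_Ici_zero {S : Set ℝ} (hS : IsUpperSet S) :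
    sInf (S ∩ Ici 0) = max (sInf S) 0 := by
  rcases S.eq_empty_or_nonempty with rfl | hne
  · simp
  by_cases hbdd : BddBelow S
  · rcases le_or_gt 0 (sInf S) with h | h
    · have hsub : S ⊆ Ici 0 := fun t ht => h.trans (csInf_le hbdd ht)
      rw [inter_eq_left.2 hsub, max_eq_left h]
    · obtain ⟨t, ht, htneg⟩ := exists_lt_of_csInf_lt hne h
      rw [inter_eq_right.2 (fun x hx => hS (htneg.le.trans hx) ht : Ici 0 ⊆ S), csInf_Ici,
        max_eq_right h.le]
  · have hS_univ : S = univ := eq_univ_of_forall fun x => by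
      obtain ⟨t, ht, htx⟩ := not_bddBelow_iff.1 hbdd x
      exact hS htx.le ht
    rw [hS_univ, univ_inter, csInf_Ici, Real.sInf_univ, max_self]

theorem sSup_setOf_lt_eq_sInf_setOf_lt {F H : ℝ → ℝ} {s : ℝ} (hFH : ∀ t, F t ≤ H t)
    (hHF : ∀ ⦃t u⦄, t < u → H u ≤ F t) (hH : ∃ u, s < H u) (hF : ∃ t, F t < s)
    (hs : ∀ q : ℚ, F q ≠ s) :
    sSup {u | s < H u} = sInf {t | F t < s} := by
  have key : ∀ ⦃u t⦄, s < H u → F t < s → u ≤ t := fun u t hu ht =>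
    le_of_not_gt fun htu => ((hHF htu).trans_lt ht).not_gt hu
  obtain ⟨u₀, hu₀⟩ := hH
  obtain ⟨t₀, ht₀⟩ := hF
  refine le_antisymm (csSup_le ⟨u₀, hu₀⟩ fun u hu => le_csInf ⟨t₀, ht₀⟩ fun t => key hu) ?_
  by_contra! hlt
  obtain ⟨q, hsup, hinf⟩ := exists_rat_btwn hlt
  have hHq : H q ≤ s := not_lt.1 fun h => (le_csSup ⟨t₀, fun u hu => key hu ht₀⟩ h).not_gt hsup
  have hFq : s ≤ F q := not_lt.1 fun h => (csInf_le ⟨u₀, fun t => key hu₀⟩ h).not_gt hinf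
  exact hs q (le_antisymm ((hFH q).trans hHq) hFq)

section FiniteMeasure

variable {α : Type*} [MeasurableSpace α] {ν : Measure α} [IsFiniteMeasure ν] {f : α → ℝ}

theorem exists_measureReal_setOf_lt_lt (hf : Measurable f) {s : ℝ} (hs : 0 < s) :
    ∃ t, ν.real {x | t < f x} < s := by
  have hlim : Tendsto (fun t : ℝ => ν {x | t < f x}) atTop (𝓝 0) := by
    have := tendsto_measure_iInter_atTop (μ := ν) (s := fun t : ℝ => {x | t < f x})
      (fun _ => (measurableSet_lt measurable_const hf).nullMeasurableSet)
      (fun a b hab x hx => hab.trans_lt hx) ⟨0, measure_ne_top _ _⟩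
    rwa [iInter_eq_empty_iff.2 fun x => ⟨f x, (lt_irrefl (f x) ·)⟩, measure_empty] at this
  exact (((ENNReal.tendsto_toReal ENNReal.zero_ne_top).comp hlim).eventually
    (gt_mem_nhds hs)).exists

theorem exists_lt_measureReal_setOf_lt {s : ℝ} (hs : s < ν.real univ) :
    ∃ t, s < ν.real {x | t < f x} := by
  have hlim : Tendsto (fun t : ℝ => ν {x | -t < f x}) atTop (𝓝 (ν univ)) := by
    have := tendsto_measure_iUnion_atTop (μ := ν) (s := fun t : ℝ => {x | -t < f x})
      (fun a b hab x hx => (neg_le_neg hab).trans_lt hx)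
    rwa [iUnion_eq_univ_iff.2 fun x => ⟨-f x + 1, by simp⟩] at this
  obtain ⟨t, ht⟩ := (((ENNReal.tendsto_toReal (measure_ne_top ν univ)).comp hlim).eventually
    (lt_mem_nhds hs)).exists
  exact ⟨-t, ht⟩

theorem measureReal_setOf_lt (hf : Measurable f) (t : ℝ) :
    ν.real {x | f x < t} = ν.real univ - ν.real {x | t ≤ f x} := by
  rw [← measureReal_compl (measurableSet_le measurable_const hf)]
  simp only [compl_ofPred, not_le]

end FiniteMeasure

section Rearrangement

variable {α : Type*} [MeasurableSpace α] {μ : Measure α} {ω : Set α}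

theorem decRearr_eq_sInf_restrict {g : α → ℝ} (hg : Measurable g) (s : ℝ) :
    decRearr μ ω g s = sInf {t | (μ.restrict ω).real {x | t < g x} < s} := by
  simp only [decRearr, measureReal_def,
    Measure.restrict_apply (measurableSet_lt measurable_const hg), inter_comm _ ω]
  rfl

theorem decRearr_max_zero (hω : μ ω ≠ ∞) (g : α → ℝ) {s : ℝ} (hs : s ≤ (μ ω).toReal) :
    decRearr μ ω (fun x => max (g x) 0) s = max (decRearr μ ω g s) 0 := by
  have hfin : ∀ t, μ {x | x ∈ ω ∧ t < g x} ≠ ∞ := fun t =>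
    ((measure_mono fun x hx => hx.1).trans_lt hω.lt_top).ne
  have hupper : IsUpperSet {t | (μ {x | x ∈ ω ∧ t < g x}).toReal < s} := fun a b hab ha =>
    (ENNReal.toReal_mono (hfin a) (measure_mono fun x hx => ⟨hx.1, hab.trans_lt hx.2⟩)).trans_lt ha
  have hset : {t : ℝ | (μ {x | x ∈ ω ∧ t < max (g x) 0}).toReal < s} =
      {t | (μ {x | x ∈ ω ∧ t < g x}).toReal < s} ∩ Ici 0 := by
    ext t
    rcases lt_or_ge t 0 with ht | ht
    · have hω_eq : {x | x ∈ ω ∧ t < max (g x) 0} = ω := by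
        ext x; simp [ht]
      simp only [mem_ofPred_eq, hω_eq, mem_inter_iff, mem_Ici]
      exact iff_of_false hs.not_gt fun h => ht.not_ge h.2
    · simp [ht.not_gt, ht]
  rw [decRearr, hset, hupper.sInf_inter_Ici_zero, decRearr]

theorem decRearr_neg_measure_sub {f : α → ℝ} (hω : μ ω ≠ ∞) (hf : Measurable f) {s : ℝ}
    (hs : s ∈ Ioo 0 (μ ω).toReal) (hsF : ∀ q : ℚ, (μ.restrict ω).real {x | q < f x} ≠ s) :
    decRearr μ ω (fun x => -f x) ((μ ω).toReal - s) = -decRearr μ ω f s := by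
  have : IsFiniteMeasure (μ.restrict ω) := isFiniteMeasure_restrict.2 hω
  have hV : (μ ω).toReal = (μ.restrict ω).real univ := by
    rw [measureReal_def, Measure.restrict_apply_univ]
  have hset : {t | (μ.restrict ω).real {x | t < -f x} < (μ ω).toReal - s} =
      -{u | s < (μ.restrict ω).real {x | u ≤ f x}} := by
    ext t
    simp only [mem_ofPred_eq, Set.mem_neg, lt_neg, measureReal_setOf_lt hf, hV]
    constructor <;> intro h <;> linarith
  rw [decRearr_eq_sInf_restrict (g := fun x => -f x) hf.neg, decRearr_eq_sInf_restrict hf,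
    hset, Real.sInf_neg, neg_inj]
  obtain ⟨u, hu⟩ := exists_lt_measureReal_setOf_lt (f := f) (hV ▸ hs.2)
  have hFH : ∀ t, (μ.restrict ω).real {x | t < f x} ≤ (μ.restrict ω).real {x | t ≤ f x} :=
    fun t => measureReal_mono (ofPred_subset_ofPred.2 fun _ => le_of_lt)
  exact sSup_setOf_lt_eq_sInf_setOf_lt hFH
    (fun t u htu => measureReal_mono (ofPred_subset_ofPred.2 fun _ => htu.trans_le))
    ⟨u, hu.trans_le (hFH u)⟩ (exists_measureReal_setOf_lt_lt hf hs.1) hsF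

end Rearrangement

theorem stmt_6_general (d : ℕ) (ω : Set (EuclideanSpace ℝ (Fin d)))
    (hωb : Bornology.IsBounded ω)
    (f : EuclideanSpace ℝ (Fin d) → ℝ) (hf : Measurable f) :
    ∀ᵐ s ∂(volume.restrict (Set.Ico (0 : ℝ) (volume ω).toReal)),
      decRearr volume ω f s = talenti volume ω f s := by
  have hω : volume ω ≠ ∞ := hωb.measure_lt_top.ne
  have hE : (insert 0 (range fun q : ℚ => (volume.restrict ω).real {x | q < f x})).Countable :=
    (countable_range _).insert 0
  filter_upwards [ae_restrict_mem measurableSet_Ico,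
    ae_restrict_of_ae (measure_eq_zero_iff_ae_notMem.1 (hE.measure_zero volume))] with s hs hsE
  have hs_pos : 0 < s := hs.1.lt_of_ne' fun h => hsE (.inl h)
  rw [talenti, decRearr_max_zero hω f hs.2.le,
    decRearr_max_zero hω (fun x => -f x) (sub_le_self _ hs.1),
    decRearr_neg_measure_sub hω hf ⟨hs_pos, hs.2⟩ fun q h => hsE (.inr ⟨q, h⟩),
    max_zero_sub_max_neg_zero_eq_self]

/-- For a bounded open set `ω` and `f ∈ L^∞(ω)`, the signed Schwarz
symmetrization `f*` (signed decreasing rearrangement) and Talenti's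
symmetrization `f†` coincide almost everywhere on `[0, |ω|)`. -/
theorem stmt_6 (d : ℕ) (ω : Set (EuclideanSpace ℝ (Fin d)))
    (hωo : IsOpen ω) (hωb : Bornology.IsBounded ω)
    (f : EuclideanSpace ℝ (Fin d) → ℝ) (hf : Measurable f)
    (hfb : MemLp f ⊤ (volume.restrict ω)) :
    ∀ᵐ s ∂(volume.restrict (Set.Ico (0 : ℝ) (volume ω).toReal)),
      decRearr volume ω f s = talenti volume ω f s :=
  stmt_6_general d ω hωb f hf
end

section
/- Let d ≥ 2 and define for a ∈ (0,1): b(a) = (1−a^d)^{1/d} and K(a) = a^{d−1}/(1 + b(a)^{d−1}). Then the function T₁(a) = (a K(a))^d · K'(a)/K(a) is positive and strictly increasing on (0,1), and T₁(a) ∼ (d−1)/b(a) → ∞ as a → 1⁻. -/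
open Set Filter Topology

/-- `b(a) = (1 − a^d)^{1/d}`. -/
noncomputable def bfun (d : ℕ) (x : ℝ) : ℝ := (1 - x ^ d) ^ ((d : ℝ)⁻¹)

/-- `K(a) = a^{d−1} / (1 + b(a)^{d−1})`. -/
noncomputable def Kfun (d : ℕ) (x : ℝ) : ℝ := x ^ (d - 1) / (1 + bfun d x ^ (d - 1))

/-- `K'(a) = (d−1)(b+1)K²/(a b a^{d−1})`. -/
noncomputable def Kderiv (d : ℕ) (x : ℝ) : ℝ :=
  (d - 1 : ℝ) * (bfun d x + 1) * (Kfun d x) ^ 2 / (x * bfun d x * x ^ (d - 1))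

/-- `T₁(a) = (a K(a))^d · K'(a)/K(a)`. -/
noncomputable def T1 (d : ℕ) (x : ℝ) : ℝ := (x * Kfun d x) ^ d * Kderiv d x / Kfun d x

/-! On `(0,1)` the definitions simplify to `T₁ = (d − 1)(1 + 1/b) K^{d+1}`. As `a` increases, `b`
decreases to `0` and `K` increases to `1`, so `1 + 1/b` increases strictly and `K^{d+1}` weakly,
which gives positivity and strict monotonicity. Moreover `T₁ / ((d − 1)/b) = (b + 1) K^{d+1} → 1`,
while `(d − 1)/b → ∞`. -/

section
variable {d : ℕ} {x : ℝ}

lemma bfun_nonneg (hx₀ : 0 ≤ x) (hx₁ : x ≤ 1) : 0 ≤ bfun d x :=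
  Real.rpow_nonneg (sub_nonneg.2 (pow_le_one₀ hx₀ hx₁)) _

lemma bfun_pos (hd : d ≠ 0) (hx : x ∈ Ioo (0 : ℝ) 1) : 0 < bfun d x :=
  Real.rpow_pos_of_pos (sub_pos.2 (pow_lt_one₀ hx.1.le hx.2 hd)) _

lemma bfun_one (hd : d ≠ 0) : bfun d 1 = 0 := by
  simp [bfun, hd]

lemma strictAntiOn_bfun (hd : d ≠ 0) : StrictAntiOn (bfun d) (Ioo 0 1) := by
  intro x hx y hy hxy
  have hpow : x ^ d < y ^ d := pow_lt_pow_left₀ hxy hx.1.le hd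
  exact Real.rpow_lt_rpow (sub_nonneg.2 (pow_le_one₀ hy.1.le hy.2.le)) (by linarith)
    (by positivity)

lemma continuousAt_bfun_one (hd : d ≠ 0) : ContinuousAt (bfun d) 1 :=
  (continuous_const.sub (continuous_pow d)).continuousAt.rpow_const (Or.inr (by positivity))

lemma tendsto_bfun_nhdsLT_one (hd : d ≠ 0) : Tendsto (bfun d) (𝓝[<] 1) (𝓝[>] 0) := by
  refine tendsto_nhdsWithin_iff.2 ⟨?_, ?_⟩
  · simpa [bfun_one hd] using (continuousAt_bfun_one hd).tendsto.mono_left nhdsWithin_le_nhds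
  · filter_upwards [Ioo_mem_nhdsLT zero_lt_one] with x hx using bfun_pos hd hx

lemma Kfun_pos (hx : x ∈ Ioo (0 : ℝ) 1) : 0 < Kfun d x := by
  have := bfun_nonneg (d := d) hx.1.le hx.2.le
  have := hx.1
  unfold Kfun
  positivity

lemma monotoneOn_Kfun (hd : d ≠ 0) : MonotoneOn (Kfun d) (Ioo 0 1) := by
  intro x hx y hy hxy
  have hby := bfun_pos hd hy
  have hb : bfun d y ≤ bfun d x := (strictAntiOn_bfun hd).antitoneOn hx hy hxy
  have := hx.1
  unfold Kfun
  gcongr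
  exact pow_nonneg hy.1.le _

lemma continuousAt_Kfun_one (hd : d ≠ 0) : ContinuousAt (Kfun d) 1 :=
  (continuousAt_id.pow _).div (continuousAt_const.add ((continuousAt_bfun_one hd).pow _))
    (by rw [bfun_one hd]; positivity)

lemma Kfun_one (hd : 2 ≤ d) : Kfun d 1 = 1 := by
  simp [Kfun, bfun_one (by omega : d ≠ 0), zero_pow (by omega : d - 1 ≠ 0)]

lemma T1_eq (hd : d ≠ 0) (hx : x ∈ Ioo (0 : ℝ) 1) :
    T1 d x = (d - 1) * (1 + (bfun d x)⁻¹) * Kfun d x ^ (d + 1) := by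
  have hb := (bfun_pos hd hx).ne'
  have hK := (Kfun_pos (d := d) hx).ne'
  have hx₀ := hx.1.ne'
  have hxd : x ^ d = x * x ^ (d - 1) := by rw [← pow_succ']; congr 1; omega
  rw [T1, Kderiv, mul_pow, hxd]
  field_simp
  ring

lemma T1_div_eq (hd : 2 ≤ d) (hx : x ∈ Ioo (0 : ℝ) 1) :
    T1 d x / ((d - 1) / bfun d x) = (bfun d x + 1) * Kfun d x ^ (d + 1) := by
  have hb := (bfun_pos (d := d) (by omega) hx).ne'
  have hd₁ : (d - 1 : ℝ) ≠ 0 := (sub_pos.2 (by exact_mod_cast hd)).ne'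
  rw [T1_eq (by omega) hx]
  field_simp

lemma T1_pos (hd : 2 ≤ d) (hx : x ∈ Ioo (0 : ℝ) 1) : 0 < T1 d x := by
  have hd₁ : (0 : ℝ) < d - 1 := sub_pos.2 (by exact_mod_cast hd)
  have := bfun_pos (d := d) (by omega) hx
  rw [T1_eq (by omega) hx]
  exact mul_pos (mul_pos hd₁ (by positivity)) (pow_pos (Kfun_pos hx) _)

lemma strictMonoOn_T1 (hd : 2 ≤ d) : StrictMonoOn (T1 d) (Ioo 0 1) := by
  intro x hx y hy hxy
  have hd₀ : d ≠ 0 := by omega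
  have hd₁ : (0 : ℝ) < d - 1 := sub_pos.2 (by exact_mod_cast hd)
  have hby := bfun_pos hd₀ hy
  have hKx := Kfun_pos (d := d) hx
  have hb : bfun d y < bfun d x := strictAntiOn_bfun hd₀ hx hy hxy
  have hK : Kfun d x ≤ Kfun d y := monotoneOn_Kfun hd₀ hx hy hxy.le
  rw [T1_eq hd₀ hx, T1_eq hd₀ hy]
  calc (d - 1) * (1 + (bfun d x)⁻¹) * Kfun d x ^ (d + 1)
      < (d - 1) * (1 + (bfun d y)⁻¹) * Kfun d x ^ (d + 1) := by gcongr
    _ ≤ (d - 1) * (1 + (bfun d y)⁻¹) * Kfun d y ^ (d + 1) := by gcongr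

end

/-- For `d ≥ 2`, the function `T₁(a) = (aK(a))^d K'(a)/K(a)` is positive and
strictly increasing on `(0,1)`, satisfies `T₁(a) ∼ (d−1)/b(a)` as `a → 1⁻`,
and tends to `∞` as `a → 1⁻`. -/
theorem stmt_9 (d : ℕ) (hd : 2 ≤ d) :
    (∀ a ∈ Set.Ioo (0 : ℝ) 1, 0 < T1 d a) ∧
    StrictMonoOn (T1 d) (Set.Ioo (0 : ℝ) 1) ∧
    Tendsto (fun a => T1 d a / ((d - 1 : ℝ) / bfun d a)) (𝓝[<] (1 : ℝ)) (𝓝 1) ∧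
    Tendsto (T1 d) (𝓝[<] (1 : ℝ)) atTop := by
  have hd₀ : d ≠ 0 := by omega
  have hd₁ : (0 : ℝ) < d - 1 := sub_pos.2 (by exact_mod_cast hd)
  have hIoo : ∀ᶠ a in 𝓝[<] (1 : ℝ), a ∈ Ioo (0 : ℝ) 1 := Ioo_mem_nhdsLT zero_lt_one
  have hb := tendsto_bfun_nhdsLT_one hd₀
  have hK : Tendsto (Kfun d) (𝓝[<] 1) (𝓝 1) := by
    simpa [Kfun_one hd] using (continuousAt_Kfun_one hd₀).tendsto.mono_left nhdsWithin_le_nhds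
  have hratio : Tendsto (fun a => T1 d a / ((d - 1 : ℝ) / bfun d a)) (𝓝[<] (1 : ℝ)) (𝓝 1) := by
    have hlim : Tendsto (fun a => (bfun d a + 1) * Kfun d a ^ (d + 1)) (𝓝[<] 1) (𝓝 1) := by
      simpa using ((tendsto_nhds_of_tendsto_nhdsWithin hb).add_const 1).mul (hK.pow (d + 1))
    exact hlim.congr' (hIoo.mono fun a ha => (T1_div_eq hd ha).symm)
  refine ⟨fun a ha => T1_pos hd ha, strictMonoOn_T1 hd, hratio, ?_⟩
  have hscale : Tendsto (fun a => (d - 1 : ℝ) / bfun d a) (𝓝[<] 1) atTop := by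
    simpa only [div_eq_mul_inv, Function.comp_apply] using
      (tendsto_inv_nhdsGT_zero.comp hb).const_mul_atTop hd₁
  refine (hratio.pos_mul_atTop one_pos hscale).congr' (hIoo.mono fun a ha => ?_)
  exact div_mul_cancel₀ _ (div_pos hd₁ (bfun_pos hd₀ ha)).ne'
end
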